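/- arXiv:2101.04415 — 8 statements merged into one kernel-verified Lean document; each statement's English description precedes it below -/
import Mathlib

section
/- Let Γ be a finite simplicial graph containing no clique on r+1 vertices. Then every connected full (induced) subgraph of the opposite graph Γ° has diameter at most 2r−1. -/
/-!
Take a geodesic `x = v₀, v₁, …, v_d = y` in the induced subgraph `Γᶜ[Λ]`. Two of its vertices
`vᵢ, vⱼ` with `j ≥ i + 2` are distinct and not adjacent in `Γᶜ[Λ]`, since otherwise the geodesic
could be shortcut; as the subgraph is induced, they are adjacent in `Γ`. Hence if `d ≥ 2r` the
vertices `v₀, v₂, …, v_{2r}` form a clique on `r + 1` vertices in `Γ`.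
-/

namespace SimpleGraph

variable {V : Type*} {G : SimpleGraph V}

lemma compl_induce (s : Set V) : (G.induce s)ᶜ = Gᶜ.induce s := by
  ext x y
  simp [Subtype.ext_iff]

namespace Walk

variable {u v : V} {p : G.Walk u v}

lemma not_adj_getVert_of_length_eq_dist (hp : p.length = G.dist u v) {i j : ℕ}
    (hij : i + 1 < j) (hj : j ≤ p.length) : ¬ G.Adj (p.getVert i) (p.getVert j) := fun hadj => by
  have := G.dist_le ((p.take i).append (.cons hadj (p.drop j)))
  simp only [length_append, length_cons, take_length, drop_length] at this
  omega

lemma compl_adj_getVert_of_length_eq_dist (hp : p.length = G.dist u v) {i j : ℕ}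
    (hij : i + 1 < j) (hj : j ≤ p.length) : Gᶜ.Adj (p.getVert i) (p.getVert j) := by
  refine ⟨fun heq => ?_, not_adj_getVert_of_length_eq_dist hp hij hj⟩
  have := (p.isPath_of_length_eq_dist hp).getVert_injOn (by simp only [Set.mem_ofPred_eq]; omega)
    (by simpa using hj) heq
  omega

lemma not_cliqueFree_compl_of_length_eq_dist (hp : p.length = G.dist u v) {r : ℕ}
    (hr : 2 * r ≤ p.length) : ¬ Gᶜ.CliqueFree (r + 1) := by
  let f : completeGraph (Fin (r + 1)) →g Gᶜ :=
    { toFun k := p.getVert (2 * k)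
      map_rel' {k l} hkl := by
        rcases Fin.lt_or_lt_of_ne hkl with hlt | hlt
        · exact compl_adj_getVert_of_length_eq_dist hp (by omega) (by omega)
        · exact (compl_adj_getVert_of_length_eq_dist hp (by omega) (by omega)).symm }
  rw [not_cliqueFree_iff_top_isContained]
  exact (f.toCopy (Hom.injective_of_top_hom f)).isContained

end Walk

lemma dist_lt_two_mul_of_cliqueFree_compl {r : ℕ} (h : Gᶜ.CliqueFree (r + 1)) (u v : V) :
    G.dist u v < 2 * r := by
  by_contra! hle
  rcases Nat.eq_zero_or_pos r with rfl | hr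
  · exact h {u} (isNClique_singleton.mpr rfl)
  have hreach : G.Reachable u v := Reachable.of_dist_ne_zero (by omega)
  obtain ⟨p, hp⟩ := hreach.exists_walk_length_eq_dist
  exact Walk.not_cliqueFree_compl_of_length_eq_dist hp (hp ▸ hle) h

end SimpleGraph

theorem stmt0_general {V : Type*} (Γ : SimpleGraph V) (r : ℕ)
    (hcl : Γ.CliqueFree (r + 1)) (Λ : Set V) :
    ∀ x y : Λ, (Γᶜ.induce Λ).dist x y ≤ 2 * r - 1 := by
  have hcl' : (Γᶜ.induce Λ)ᶜ.CliqueFree (r + 1) := by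
    rw [SimpleGraph.compl_induce, compl_compl]
    exact hcl.comap (SimpleGraph.Copy.induce Γ Λ).isContained
  intro x y
  have := SimpleGraph.dist_lt_two_mul_of_cliqueFree_compl hcl' x y
  omega

/-- If a finite simplicial graph `Γ` contains no clique on `r+1`
vertices, then every connected full (induced) subgraph of the opposite graph
`Γᶜ` has diameter at most `2r - 1`. -/
theorem stmt0 {V : Type*} [Fintype V] (Γ : SimpleGraph V) (r : ℕ)
    (hcl : Γ.CliqueFree (r + 1)) (Λ : Set V)
    (hconn : (Γᶜ.induce Λ).Connected) :
    ∀ x y : Λ, (Γᶜ.induce Λ).dist x y ≤ 2 * r - 1 :=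
  stmt0_general Γ r hcl Λ
end

section
/- Let Γ be a finite connected simplicial graph containing two vertices at graph distance at least 3. Then Γ admits a good partition of its vertex set. -/
/-- A *good partition* of the vertex set of a simplicial graph `Γ` into three
nonempty parts `Lp ⊔ L ⊔ Lm` (Definition of the paper): (i) every vertex of
`Lp` is at graph distance at least 2 from every vertex of `Lm`; (ii) for each
sign and each `w` in that part, no vertex `v` of the other two parts has
`lk v ⊆ lk w ∪ (same part as w)`; (iii) for each `w` in `Lp` (resp. `Lm`),
the full subgraph spanned by `(L ∪ Lm) \ St w` (resp. `(L ∪ Lp) \ St w`)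
is connected. -/
def GoodPartition {V : Type*} (Γ : SimpleGraph V) (Lp L Lm : Set V) : Prop :=
  Lp.Nonempty ∧ L.Nonempty ∧ Lm.Nonempty ∧
  Disjoint Lp L ∧ Disjoint Lp Lm ∧ Disjoint L Lm ∧
  Lp ∪ L ∪ Lm = Set.univ ∧
  (∀ w ∈ Lp, ∀ v ∈ Lm, 2 ≤ Γ.dist w v) ∧
  (∀ w ∈ Lp, ¬ ∃ v ∈ L ∪ Lm, Γ.neighborSet v ⊆ Γ.neighborSet w ∪ Lp) ∧
  (∀ w ∈ Lm, ¬ ∃ v ∈ L ∪ Lp, Γ.neighborSet v ⊆ Γ.neighborSet w ∪ Lm) ∧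
  (∀ w ∈ Lp, (Γ.induce ((L ∪ Lm) \ (Γ.neighborSet w ∪ {w}))).Connected) ∧
  (∀ w ∈ Lm, (Γ.induce ((L ∪ Lp) \ (Γ.neighborSet w ∪ {w}))).Connected)

/-!
Fix `x` and a vertex `y₀` at maximal distance `E ≥ 3` from `x`. Let `Y` be the set of vertices at
distance `E` from `x` that lie in the component of `y₀` in the closed neighbourhood of the sphere of
radius `E`; with `g` the distance to `Y`, take `Λ⁻ = Y`, `Λ = {1 ≤ g ≤ 2}` and `Λ⁺ = {g ≥ 3} ∋ x`.
The star of a vertex of `Λ⁺` misses the connected set `{g ≤ 1}`, to which every vertex of `Λ`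
descends along `g`. The star of `w ∈ Y` misses `x`, and every vertex outside `Y` descends to `x`
along geodesics avoiding it: a geodesic step that lands next to `w` starts on the sphere two steps
from `w`, hence in `Y`. The same two facts give condition (ii).
-/

namespace SimpleGraph

variable {V : Type*} {G : SimpleGraph V}

lemma Adj.dist_le_dist_add_one {v w : V} (h : G.Adj v w) (u : V) :
    G.dist u v ≤ G.dist u w + 1 := by
  have := h.diff_dist_adj (u := u)
  omega

lemma Connected.exists_adj_dist_add_one_eq (hG : G.Connected) {u v : V} (huv : u ≠ v) :
    ∃ m, G.Adj v m ∧ G.dist u m + 1 = G.dist u v := by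
  obtain ⟨p, hp⟩ := hG.exists_walk_length_eq_dist v u
  cases p with
  | nil => exact absurd rfl huv
  | @cons _ m _ hadj q =>
    refine ⟨m, hadj, ?_⟩
    have hq : G.dist u m ≤ q.length := dist_comm (G := G) ▸ dist_le q
    have := hadj.dist_le_dist_add_one u
    rw [Walk.length_cons, dist_comm] at hp
    omega

lemma induce_connected_of_exists_adj_lt {K T : Set V} (f : V → ℕ) (hK : (G.induce K).Connected)
    (hKT : K ⊆ T) (hdesc : ∀ a ∈ T, a ∉ K → ∃ b ∈ T, G.Adj a b ∧ f b < f a) :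
    (G.induce T).Connected := by
  obtain ⟨⟨k, hk⟩⟩ := hK.nonempty
  rw [connected_iff_exists_forall_reachable]
  refine ⟨⟨k, hKT hk⟩, ?_⟩
  rintro ⟨a, ha⟩
  induction hfa : f a using Nat.strong_induction_on generalizing a with
  | _ n ih =>
    by_cases haK : a ∈ K
    · exact (hK.preconnected ⟨k, hk⟩ ⟨a, haK⟩).map (induceHomOfLE G hKT).toHom
    · obtain ⟨b, hb, hab, hlt⟩ := hdesc a ha haK
      exact (ih _ (hfa ▸ hlt) b hb rfl).trans (induce_adj.2 hab.symm).reachable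

/-- Junk value `0` when `Y` is empty. -/
noncomputable def infDist (G : SimpleGraph V) (v : V) (Y : Set V) : ℕ := sInf (G.dist v '' Y)

section infDist

variable {Y : Set V} {v w y : V}

lemma infDist_le_dist (hy : y ∈ Y) : G.infDist v Y ≤ G.dist v y :=
  Nat.sInf_le ⟨y, hy, rfl⟩

lemma exists_dist_eq_infDist (hY : Y.Nonempty) (v : V) : ∃ y ∈ Y, G.dist v y = G.infDist v Y :=
  Nat.sInf_mem (hY.image _)

lemma Connected.infDist_eq_zero_iff (hG : G.Connected) (hY : Y.Nonempty) :
    G.infDist v Y = 0 ↔ v ∈ Y := by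
  refine ⟨fun h ↦ ?_, fun hv ↦ Nat.le_zero.1 (by simpa using infDist_le_dist (G := G) (v := v) hv)⟩
  obtain ⟨y, hy, hvy⟩ := exists_dist_eq_infDist (G := G) hY v
  rwa [hG.dist_eq_zero_iff.1 (hvy.trans h)]

lemma Adj.infDist_le_infDist_add_one (h : G.Adj v w) : G.infDist v Y ≤ G.infDist w Y + 1 := by
  rcases Y.eq_empty_or_nonempty with rfl | hY
  · simp [infDist]
  obtain ⟨y, hy, hwy⟩ := exists_dist_eq_infDist (G := G) hY w
  calc G.infDist v Y ≤ G.dist v y := infDist_le_dist hy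
    _ = G.dist y v := dist_comm
    _ ≤ G.dist y w + 1 := h.dist_le_dist_add_one y
    _ = G.infDist w Y + 1 := by rw [dist_comm, hwy]

lemma Connected.exists_adj_infDist_add_one_eq (hG : G.Connected) (hY : Y.Nonempty) (hv : v ∉ Y) :
    ∃ m, G.Adj v m ∧ G.infDist m Y + 1 = G.infDist v Y := by
  obtain ⟨y, hy, hvy⟩ := exists_dist_eq_infDist (G := G) hY v
  obtain ⟨m, hvm, hm⟩ := hG.exists_adj_dist_add_one_eq (u := y) (ne_of_mem_of_not_mem hy hv)
  have := infDist_le_dist (G := G) (v := m) hy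
  have := hvm.infDist_le_infDist_add_one (Y := Y)
  rw [dist_comm (u := y), dist_comm (u := y)] at hm
  exact ⟨m, hvm, by omega⟩

end infDist

structure IsFarCluster (G : SimpleGraph V) (x : V) (E : ℕ) (Y : Set V) : Prop where
  dist_le : ∀ v, G.dist x v ≤ E
  nonempty : Y.Nonempty
  dist_eq : ∀ y ∈ Y, G.dist x y = E
  mem_of_adj_adj : ∀ w ∈ Y, ∀ m v, G.Adj w m → G.Adj m v → G.dist x v = E → v ∈ Y
  connected_induce : (G.induce {v | G.infDist v Y ≤ 1}).Connected

namespace IsFarCluster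

variable {x u v w : V} {E : ℕ} {Y : Set V} (hY : IsFarCluster G x E Y)
include hY

lemma infDist_self : G.infDist x Y = E := by
  obtain ⟨y, hy, hxy⟩ := exists_dist_eq_infDist (G := G) hY.nonempty x
  rw [← hxy, hY.dist_eq y hy]

lemma notMem_of_dist_lt (h : G.dist x v < E) : v ∉ Y :=
  fun hv ↦ (hY.dist_eq v hv ▸ h).false

lemma ne_of_mem (hE : 0 < E) (hv : v ∈ Y) : x ≠ v := by
  rintro rfl
  exact hY.notMem_of_dist_lt (by simpa using hE) hv

lemma not_adj_of_dist_add_one_eq (hw : w ∈ Y) (hv : v ∉ Y) (hvm : G.Adj v u)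
    (hu : G.dist x u + 1 = G.dist x v) : ¬ G.Adj w u := by
  intro hwu
  have := hwu.dist_le_dist_add_one x
  have := hY.dist_eq w hw
  have := hY.dist_le v
  exact hv (hY.mem_of_adj_adj w hw u v hwu hvm.symm (by omega))

lemma exists_infDist_eq_one (hG : G.Connected) (hE : 0 < E) : ∃ v, G.infDist v Y = 1 := by
  obtain ⟨y, hy⟩ := hY.nonempty
  obtain ⟨m, hym, hm⟩ := hG.exists_adj_dist_add_one_eq (hY.ne_of_mem hE hy)
  have hmY : m ∉ Y := hY.notMem_of_dist_lt (by have := hY.dist_eq y hy; omega)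
  have := (hG.infDist_eq_zero_iff hY.nonempty).not.2 hmY
  have := hym.symm.infDist_le_infDist_add_one (Y := Y)
  have := (hG.infDist_eq_zero_iff hY.nonempty).2 hy
  exact ⟨m, by omega⟩

lemma not_neighborSet_subset_far (hG : G.Connected) (hE : 0 < E) (hw : 3 ≤ G.infDist w Y)
    (hv : G.infDist v Y ≤ 2) :
    ¬ G.neighborSet v ⊆ G.neighborSet w ∪ {u | 3 ≤ G.infDist u Y} := by
  intro hsub
  obtain ⟨m, hvm, hm⟩ : ∃ m, G.Adj v m ∧ G.infDist m Y ≤ 1 := by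
    by_cases hvY : v ∈ Y
    · obtain ⟨m, hvm, -⟩ := hG.exists_adj_dist_add_one_eq (hY.ne_of_mem hE hvY)
      have := hvm.symm.infDist_le_infDist_add_one (Y := Y)
      have := (hG.infDist_eq_zero_iff hY.nonempty).2 hvY
      exact ⟨m, hvm, by omega⟩
    · obtain ⟨m, hvm, hm⟩ := hG.exists_adj_infDist_add_one_eq hY.nonempty hvY
      exact ⟨m, hvm, by omega⟩
  rcases hsub hvm with hwm | hmfar
  · have := hwm.infDist_le_infDist_add_one (Y := Y)
    omega
  · exact absurd hmfar (by simp only [Set.mem_ofPred_eq]; omega)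

lemma not_neighborSet_subset (hG : G.Connected) (hE : 3 ≤ E) (hw : w ∈ Y) (hv : v ∉ Y) :
    ¬ G.neighborSet v ⊆ G.neighborSet w ∪ Y := by
  intro hsub
  have hwE := hY.dist_eq w hw
  obtain ⟨m, hvm, hmE, hwm⟩ : ∃ m, G.Adj v m ∧ G.dist x m < E ∧ ¬ G.Adj w m := by
    by_cases hxv : x = v
    · subst hxv
      obtain ⟨m, hxm, -⟩ := hG.exists_adj_dist_add_one_eq (hY.ne_of_mem (by omega) hw).symm
      have hxm1 : G.dist x m = 1 := dist_eq_one_iff_adj.2 hxm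
      refine ⟨m, hxm, by omega, fun hwm ↦ ?_⟩
      have := hwm.dist_le_dist_add_one x
      omega
    · obtain ⟨m, hvm, hm⟩ := hG.exists_adj_dist_add_one_eq hxv
      have := hY.dist_le v
      exact ⟨m, hvm, by omega, hY.not_adj_of_dist_add_one_eq hw hv hvm hm⟩
  rcases hsub hvm with hwm' | hmY
  · exact hwm hwm'
  · exact hY.notMem_of_dist_lt hmE hmY

lemma connected_induce_infDist_le_two_diff (hG : G.Connected) (hw : 3 ≤ G.infDist w Y) :
    (G.induce ({v | G.infDist v Y ≤ 2} \ (G.neighborSet w ∪ {w}))).Connected := by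
  have hnear : ∀ {v}, G.infDist v Y ≤ 1 →
      v ∈ {v | G.infDist v Y ≤ 2} \ (G.neighborSet w ∪ {w}) := by
    intro v hv
    refine ⟨by simp only [Set.mem_ofPred_eq]; omega, ?_⟩
    rintro (hwv | rfl)
    · have := hwv.infDist_le_infDist_add_one (Y := Y)
      omega
    · omega
  refine induce_connected_of_exists_adj_lt (G.infDist · Y) hY.connected_induce
    (fun v hv ↦ hnear hv) ?_
  rintro a ⟨ha, -⟩ hna
  have haY : a ∉ Y := fun haY ↦
    hna (by simp [(hG.infDist_eq_zero_iff hY.nonempty).2 haY])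
  obtain ⟨m, ham, hm⟩ := hG.exists_adj_infDist_add_one_eq hY.nonempty haY
  simp only [Set.mem_ofPred_eq] at ha
  exact ⟨m, hnear (by omega), ham, by omega⟩

lemma connected_induce_compl_diff (hG : G.Connected) (hE : 2 ≤ E) (hw : w ∈ Y) :
    (G.induce (Yᶜ \ (G.neighborSet w ∪ {w}))).Connected := by
  have hwE := hY.dist_eq w hw
  have hx : x ∈ Yᶜ \ (G.neighborSet w ∪ {w}) := by
    refine ⟨hY.notMem_of_dist_lt (by simp; omega), ?_⟩
    rintro (hwx | rfl)
    · have := dist_eq_one_iff_adj.2 hwx.symm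
      omega
    · simp at hwE
      omega
  refine induce_connected_of_exists_adj_lt (G.dist x) ?_ (Set.singleton_subset_iff.2 hx) ?_
  · rw [induce_singleton_eq_top]
    exact connected_top
  rintro a ⟨haY, -⟩ hax
  obtain ⟨m, ham, hm⟩ := hG.exists_adj_dist_add_one_eq (Ne.symm hax)
  have hmY : m ∉ Y := hY.notMem_of_dist_lt (by have := hY.dist_le a; omega)
  refine ⟨m, ⟨hmY, ?_⟩, ham, by omega⟩
  rintro (hwm | rfl)
  · exact hY.not_adj_of_dist_add_one_eq hw haY ham hm hwm
  · exact hmY hw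

theorem goodPartition (hG : G.Connected) (hE : 3 ≤ E) :
    GoodPartition G {v | 3 ≤ G.infDist v Y} {v | 1 ≤ G.infDist v Y ∧ G.infDist v Y ≤ 2} Y := by
  have hzero (v : V) : G.infDist v Y = 0 ↔ v ∈ Y := hG.infDist_eq_zero_iff hY.nonempty
  have hnear : {v | 1 ≤ G.infDist v Y ∧ G.infDist v Y ≤ 2} ∪ Y = {v | G.infDist v Y ≤ 2} := by
    ext v
    simp only [Set.mem_union, Set.mem_ofPred_eq, ← hzero v]
    omega
  have hcompl : {v | 1 ≤ G.infDist v Y ∧ G.infDist v Y ≤ 2} ∪ {v | 3 ≤ G.infDist v Y} = Yᶜ := by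
    ext v
    simp only [Set.mem_union, Set.mem_ofPred_eq, Set.mem_compl_iff, ← hzero v]
    omega
  obtain ⟨v₁, hv₁⟩ := hY.exists_infDist_eq_one hG (by omega)
  refine ⟨⟨x, by simp [hY.infDist_self, hE]⟩, ⟨v₁, by simp [hv₁]⟩, hY.nonempty, ?_, ?_, ?_, ?_,
    fun w hw v hv ↦ ?_, fun w hw ↦ ?_, fun w hw ↦ ?_, fun w hw ↦ ?_, fun w hw ↦ ?_⟩
  · exact Set.disjoint_left.2 fun v h₁ h₂ ↦ by simp only [Set.mem_ofPred_eq] at h₁ h₂; omega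
  · exact Set.disjoint_left.2 fun v h₁ h₂ ↦ by
      simp only [Set.mem_ofPred_eq, ← hzero v] at h₁ h₂; omega
  · exact Set.disjoint_left.2 fun v h₁ h₂ ↦ by
      simp only [Set.mem_ofPred_eq, ← hzero v] at h₁ h₂; omega
  · refine Set.eq_univ_of_forall fun v ↦ ?_
    simp only [Set.mem_union, Set.mem_ofPred_eq, ← hzero v]
    omega
  · exact le_trans (by simp only [Set.mem_ofPred_eq] at hw; omega) (infDist_le_dist hv)
  · rintro ⟨v, hv, hsub⟩
    rw [hnear] at hv
    exact hY.not_neighborSet_subset_far hG (by omega) hw hv hsub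
  · rintro ⟨v, hv, hsub⟩
    rw [hcompl] at hv
    exact hY.not_neighborSet_subset hG hE hw hv hsub
  · rw [hnear]
    exact hY.connected_induce_infDist_le_two_diff hG hw
  · rw [hcompl]
    exact hY.connected_induce_compl_diff hG (by omega) hw

end IsFarCluster

lemma Connected.exists_isFarCluster (hG : G.Connected) {x y₀ : V}
    (hmax : ∀ v, G.dist x v ≤ G.dist x y₀) : ∃ Y, G.IsFarCluster x (G.dist x y₀) Y := by
  set E := G.dist x y₀
  set N : Set V := {v | ∃ s, G.dist x s = E ∧ (v = s ∨ G.Adj v s)}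
  -- `G[N]` as a graph on all of `V`, so that its components are sets of vertices of `G`
  set H : SimpleGraph V := ((⊤ : G.Subgraph).induce N).spanningCoe
  set C : Set V := (H.connectedComponentMk y₀).supp
  have hN_of_dist {v} (hv : G.dist x v = E) : v ∈ N := ⟨v, hv, Or.inl rfl⟩
  have hC_of_adj {u v} (hu : u ∈ N) (hv : v ∈ N) (huv : G.Adj u v) (hvC : v ∈ C) : u ∈ C :=
    (ConnectedComponent.connectedComponentMk_eq_of_adj
      (show H.Adj u v from ⟨hu, hv, huv⟩)).trans hvC
  have hCN : C ⊆ N := by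
    intro v hv
    obtain ⟨p⟩ := ConnectedComponent.exact hv
    cases p with
    | nil => exact hN_of_dist rfl
    | cons h _ => exact h.1
  set Y : Set V := C ∩ {v | G.dist x v = E}
  have hY : Y.Nonempty := ⟨y₀, rfl, rfl⟩
  have hYC : {v | G.infDist v Y ≤ 1} = C := by
    ext v
    constructor
    · intro hv
      obtain ⟨y, hy, hdist⟩ := exists_dist_eq_infDist (G := G) hY v
      rcases eq_or_ne v y with rfl | hne
      · exact hy.1
      have hvy : G.Adj v y := dist_eq_one_iff_adj.1 <| by
        have := hG.pos_dist_of_ne hne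
        simp only [Set.mem_ofPred_eq] at hv
        omega
      exact hC_of_adj ⟨y, hy.2, Or.inr hvy⟩ (hN_of_dist hy.2) hvy hy.1
    · intro hv
      obtain ⟨s, hs, rfl | hvs⟩ := hCN hv
      · exact (infDist_le_dist (G := G) (Y := Y) ⟨hv, hs⟩).trans (by rw [dist_self]; omega)
      · have hsC : s ∈ C := hC_of_adj (hN_of_dist hs) (hCN hv) hvs.symm hv
        exact (infDist_le_dist (G := G) (Y := Y) ⟨hsC, hs⟩).trans (dist_eq_one_iff_adj.2 hvs).le
  refine ⟨Y, hmax, hY, fun y hy ↦ hy.2, fun w hw m v hwm hmv hv ↦ ⟨?_, hv⟩, ?_⟩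
  · have hmC : m ∈ C := hC_of_adj ⟨w, hw.2, Or.inr hwm.symm⟩ (hN_of_dist hw.2) hwm.symm hw.1
    exact hC_of_adj (hN_of_dist hv) (hCN hmC) hmv.symm hmC
  · rw [hYC]
    exact (ConnectedComponent.maximal_connected_induce_supp _).prop.mono
      fun _ _ (h : H.Adj _ _) ↦ h.2.2

end SimpleGraph

/-- a finite connected simplicial graph containing two vertices at
graph distance at least 3 admits a good partition of its vertex set. -/
theorem stmt1 {V : Type*} [Fintype V] (Γ : SimpleGraph V) (hconn : Γ.Connected)
    (x y : V) (hxy : 3 ≤ Γ.dist x y) :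
    ∃ Lp L Lm : Set V, GoodPartition Γ Lp L Lm := by
  have : Nonempty V := ⟨x⟩
  obtain ⟨y₀, hy₀⟩ := Finite.exists_max (Γ.dist x)
  obtain ⟨Y, hY⟩ := hconn.exists_isFarCluster hy₀
  exact ⟨_, _, _, hY.goodPartition hconn (hxy.trans (hy₀ y))⟩
end

section
/- Let (X,d) be a median space and A ⊆ X a subset such that 𝒥(A) ⊆ N_R(A) for some R ≥ 0. Then for every D ≥ 0 one has 𝒥(N_D(A)) ⊆ N_{2D+R}(A). Consequently, for every integer i ≥ 0, the iterate 𝒥^i(A) is contained in the closed (2^i − 1)R–neighbourhood of A. -/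
/-- `w` is a median point of `x, y, z`: it lies metrically between each pair. -/
def IsMedianPoint {X : Type*} [MetricSpace X] (x y z w : X) : Prop :=
  dist x y = dist x w + dist w y ∧ dist x z = dist x w + dist w z ∧
    dist y z = dist y w + dist w z

/-- A median-space structure on a metric space: every triple admits a unique
median point. -/
structure MedianSpaceStruct (X : Type*) [MetricSpace X] where
  m : X → X → X → X
  isMedian : ∀ x y z, IsMedianPoint x y z (m x y z)
  unique : ∀ x y z w, IsMedianPoint x y z w → w = m x y z

/-- The interval `I(x,y) = {z : m(x,y,z) = z}`. -/
def medInterval {X : Type*} [MetricSpace X] (M : MedianSpaceStruct X) (x y : X) : Set X :=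
  {z | M.m x y z = z}

/-- The operator `𝒥(A) = ⋃_{x,y ∈ A} I(x,y)`. -/
def Jop {X : Type*} [MetricSpace X] (M : MedianSpaceStruct X) (A : Set X) : Set X :=
  ⋃ x ∈ A, ⋃ y ∈ A, medInterval M x y

/-- The closed `R`-neighbourhood of a set. -/
def closedNbhd {X : Type*} [MetricSpace X] (A : Set X) (R : ℝ) : Set X :=
  {p | ∃ a ∈ A, dist p a ≤ R}

/-!
A point `z ∈ I(x, y)` with `x, y` within `D` of `x', y' ∈ A` is moved by at most
`d(x, x') + d(y, y') ≤ 2D` when replaced by `m(x', y', z)`, which lies in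
`I(x', y') ⊆ 𝒥(A) ⊆ N_R(A)`. Iterating, the radii `r_{i+1} = 2 r_i + R`, `r_0 = 0`,
are exactly `(2^i - 1) R`.
-/

namespace MedianSpaceStruct

variable {X : Type*} [MetricSpace X] (M : MedianSpaceStruct X)

theorem m_mem_medInterval (x y z : X) : M.m x y z ∈ medInterval M x y := by
  have hm : IsMedianPoint x y (M.m x y z) (M.m x y z) :=
    ⟨(M.isMedian x y z).1, by simp, by simp⟩
  exact (M.unique _ _ _ _ hm).symm

theorem dist_eq_of_mem_medInterval {x y z : X} (hz : z ∈ medInterval M x y) :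
    dist x y = dist x z + dist z y := by
  have h := (M.isMedian x y z).1
  rwa [show M.m x y z = z from hz] at h

theorem two_mul_dist_m (x y z : X) :
    2 * dist z (M.m x y z) = dist x z + dist y z - dist x y := by
  obtain ⟨hxy, hxz, hyz⟩ := M.isMedian x y z
  rw [dist_comm (M.m x y z) y] at hxy
  rw [dist_comm z]
  linarith

/-- As `m(x, y, z) = z`, this is the 1-Lipschitz property of `m` in its first two arguments. -/
theorem dist_m_le_of_mem_medInterval {x y z : X} (hz : z ∈ medInterval M x y) (x' y' : X) :
    dist z (M.m x' y' z) ≤ dist x x' + dist y y' := by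
  have hx := dist_triangle_left x' z x
  have hy := dist_triangle_left y' z y
  have hxy := dist_triangle4 x x' y' y
  rw [dist_comm y z] at hy
  rw [dist_comm y' y] at hxy
  linarith [M.two_mul_dist_m x' y' z, M.dist_eq_of_mem_medInterval hz]

theorem Jop_mono {A B : Set X} (h : A ⊆ B) : Jop M A ⊆ Jop M B := by
  intro z hz
  simp only [Jop, Set.mem_iUnion] at hz ⊢
  obtain ⟨x, hx, y, hy, hzxy⟩ := hz
  exact ⟨x, h hx, y, h hy, hzxy⟩

theorem Jop_closedNbhd_subset {A : Set X} {R : ℝ} (hJ : Jop M A ⊆ closedNbhd A R) (D : ℝ) :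
    Jop M (closedNbhd A D) ⊆ closedNbhd A (2 * D + R) := by
  intro z hz
  simp only [Jop, Set.mem_iUnion] at hz
  obtain ⟨x, ⟨x', hx', hxx'⟩, y, ⟨y', hy', hyy'⟩, hz⟩ := hz
  have hw : M.m x' y' z ∈ Jop M A := by
    simp only [Jop, Set.mem_iUnion]
    exact ⟨x', hx', y', hy', M.m_mem_medInterval x' y' z⟩
  obtain ⟨a, ha, hwa⟩ := hJ hw
  refine ⟨a, ha, ?_⟩
  calc dist z a ≤ dist z (M.m x' y' z) + dist (M.m x' y' z) a := dist_triangle _ _ _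
    _ ≤ dist x x' + dist y y' + R := add_le_add (M.dist_m_le_of_mem_medInterval hz x' y') hwa
    _ ≤ 2 * D + R := by linarith

theorem iterate_Jop_subset_closedNbhd {A : Set X} {R : ℝ} (hJ : Jop M A ⊆ closedNbhd A R)
    (i : ℕ) : (Jop M)^[i] A ⊆ closedNbhd A ((2 ^ i - 1) * R) := by
  induction i with
  | zero => exact fun z hz => ⟨z, hz, by simp⟩
  | succ i ih =>
    rw [Function.iterate_succ_apply']
    have h := (M.Jop_mono ih).trans (M.Jop_closedNbhd_subset hJ ((2 ^ i - 1) * R))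
    rwa [show 2 * ((2 ^ i - 1) * R) + R = (2 ^ (i + 1) - 1) * R by ring] at h

end MedianSpaceStruct

theorem stmt3_general {X : Type*} [MetricSpace X] (M : MedianSpaceStruct X)
    (A : Set X) (R : ℝ) (hJ : Jop M A ⊆ closedNbhd A R) :
    (∀ D : ℝ, 0 ≤ D → Jop M (closedNbhd A D) ⊆ closedNbhd A (2 * D + R)) ∧
    (∀ i : ℕ, (Jop M)^[i] A ⊆ closedNbhd A ((2 ^ i - 1) * R)) :=
  ⟨fun D _ => M.Jop_closedNbhd_subset hJ D, M.iterate_Jop_subset_closedNbhd hJ⟩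

/-- if `𝒥(A) ⊆ N_R(A)` then `𝒥(N_D(A)) ⊆ N_{2D+R}(A)` for every
`D ≥ 0`, and consequently `𝒥^i(A) ⊆ N_{(2^i - 1)R}(A)` for all `i`. -/
theorem stmt3 {X : Type*} [MetricSpace X] (M : MedianSpaceStruct X)
    (A : Set X) (R : ℝ) (hR : 0 ≤ R) (hJ : Jop M A ⊆ closedNbhd A R) :
    (∀ D : ℝ, 0 ≤ D → Jop M (closedNbhd A D) ⊆ closedNbhd A (2 * D + R)) ∧
    (∀ i : ℕ, (Jop M)^[i] A ⊆ closedNbhd A ((2 ^ i - 1) * R)) :=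
  stmt3_general M A R hJ
end

section
/- Let T₁ and T₂ be rank-1 median algebras. Then the product median algebra T₁ × T₂ contains no pentagonal configuration: there is no 5-tuple (x₁,…,x₅) in T₁ × T₂ such that for every i (indices modulo 5) the set of walls 𝒲(x_{i−1},x_i,x_{i+1} | x_{i+2},x_{i+3}) is nonempty. -/
/-- A median algebra: a set with a ternary median operation satisfying the
standard axioms. -/
structure MedianAlgebra (X : Type*) where
  med : X → X → X → X
  absorb : ∀ a b, med a a b = a
  rot : ∀ a b c, med a b c = med b c a
  swap : ∀ a b c, med a b c = med b a c
  assoc : ∀ a x b c, med (med a x b) x c = med a x (med b x c)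

/-- A subset `C` is convex for the median operation `med` if
`med(C × C × X) ⊆ C`. -/
def IsConvexSet {X : Type*} (med : X → X → X → X) (C : Set X) : Prop :=
  ∀ a ∈ C, ∀ b ∈ C, ∀ x : X, med a b x ∈ C

/-- A halfspace: a subset such that both it and its complement are nonempty
and convex. -/
def IsHalfspace {X : Type*} (med : X → X → X → X) (h : Set X) : Prop :=
  h.Nonempty ∧ hᶜ.Nonempty ∧ IsConvexSet med h ∧ IsConvexSet med hᶜ

/-- Two halfspaces (equivalently, the walls they bound) are transverse if all
four pairwise intersections of associated halfspaces are nonempty. -/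
def Transverse {X : Type*} (h k : Set X) : Prop :=
  (h ∩ k).Nonempty ∧ (h ∩ kᶜ).Nonempty ∧ (hᶜ ∩ k).Nonempty ∧ (hᶜ ∩ kᶜ).Nonempty

/-- The median algebra has rank at most `r`: any collection of pairwise
transverse (distinct) halfspaces has cardinality at most `r`. -/
def RankLE {X : Type*} (med : X → X → X → X) (r : ℕ) : Prop :=
  ∀ H : Finset (Set X), (∀ h ∈ H, IsHalfspace med h) →
    (∀ h ∈ H, ∀ k ∈ H, h ≠ k → Transverse h k) → H.card ≤ r

/-- Rank 1: no two halfspaces are transverse. -/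
def Rank1 {X : Type*} (M : MedianAlgebra X) : Prop :=
  ∀ h k : Set X, IsHalfspace M.med h → IsHalfspace M.med k → ¬ Transverse h k

/-- The operator `ℳ(A) = med(A × A × A)`. -/
def MSet {X : Type*} (med : X → X → X → X) (A : Set X) : Set X :=
  {p | ∃ a ∈ A, ∃ b ∈ A, ∃ c ∈ A, med a b c = p}

/-- The median subalgebra generated by `A`: the smallest subset containing `A`
and closed under the median operation. -/
def medSpan {X : Type*} (med : X → X → X → X) (A : Set X) : Set X :=
  ⋂₀ {S : Set X | A ⊆ S ∧ ∀ a ∈ S, ∀ b ∈ S, ∀ c ∈ S, med a b c ∈ S}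

/-- The coordinatewise median operation on a product. -/
def prodMed {X Y : Type*} (m₁ : X → X → X → X) (m₂ : Y → Y → Y → Y) :
    X × Y → X × Y → X × Y → X × Y :=
  fun p q r => (m₁ p.1 q.1 r.1, m₂ p.2 q.2 r.2)

/-!
Every halfspace of `T₁ × T₂` is the preimage of a halfspace of one of the factors: a convex set
containing two opposite corners of a rectangle contains the other two, so a halfspace whose
membership depends on the second coordinate somewhere cannot depend on the first one anywhere.
Two transverse halfspaces pulled back from the same factor would be transverse in that factor,
which has rank 1. Consecutive halfspaces of a pentagonal configuration are transverse, so they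
would have to come alternately from `T₁` and `T₂` around a cycle of odd length.
-/

open Set Function

namespace MedianAlgebra

variable {X : Type*} (M : MedianAlgebra X)

lemma med_left_right (a b : X) : M.med a b a = a := by
  rw [M.swap a b a, M.rot b a a, M.absorb]

lemma med_right_right (a b : X) : M.med a b b = b := by
  rw [M.rot a b b, M.absorb]

end MedianAlgebra

section Preimage

variable {X Y : Type*} {mX : X → X → X → X} {mY : Y → Y → Y → Y} {f : X → Y}

lemma IsConvexSet.of_preimage (hf : Surjective f)
    (hmed : ∀ a b c, f (mX a b c) = mY (f a) (f b) (f c)) {C : Set Y}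
    (hC : IsConvexSet mX (f ⁻¹' C)) : IsConvexSet mY C := by
  intro a ha b hb y
  obtain ⟨a, rfl⟩ := hf a
  obtain ⟨b, rfl⟩ := hf b
  obtain ⟨y, rfl⟩ := hf y
  rw [← hmed]
  exact hC a ha b hb y

lemma IsHalfspace.of_preimage (hf : Surjective f)
    (hmed : ∀ a b c, f (mX a b c) = mY (f a) (f b) (f c)) {h : Set Y}
    (hh : IsHalfspace mX (f ⁻¹' h)) : IsHalfspace mY h :=
  let ⟨⟨p, hp⟩, ⟨q, hq⟩, hconv, hconvc⟩ := hh
  ⟨⟨f p, hp⟩, ⟨f q, hq⟩, hconv.of_preimage hf hmed,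
    IsConvexSet.of_preimage (C := hᶜ) hf hmed hconvc⟩

lemma Transverse.of_preimage {h k : Set Y} (hT : Transverse (f ⁻¹' h) (f ⁻¹' k)) :
    Transverse h k :=
  let ⟨⟨p, hp⟩, ⟨q, hq⟩, ⟨r, hr⟩, ⟨s, hs⟩⟩ := hT
  ⟨⟨f p, hp⟩, ⟨f q, hq⟩, ⟨f r, hr⟩, ⟨f s, hs⟩⟩

lemma Rank1.not_transverse_preimage {M : MedianAlgebra Y} (hM : Rank1 M) (hf : Surjective f)
    (hmed : ∀ a b c, f (mX a b c) = M.med (f a) (f b) (f c)) {h k : Set Y}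
    (hh : IsHalfspace mX (f ⁻¹' h)) (hk : IsHalfspace mX (f ⁻¹' k)) :
    ¬ Transverse (f ⁻¹' h) (f ⁻¹' k) := fun hT =>
  hM h k (hh.of_preimage hf hmed) (hk.of_preimage hf hmed) hT.of_preimage

end Preimage

section Product

variable {T₁ T₂ : Type*} {M₁ : MedianAlgebra T₁} {M₂ : MedianAlgebra T₂}

lemma IsConvexSet.prodMed_mk_mem {C : Set (T₁ × T₂)}
    (hC : IsConvexSet (prodMed M₁.med M₂.med) C) {a₁ b₁ : T₁} {a₂ b₂ : T₂}
    (ha : (a₁, a₂) ∈ C) (hb : (b₁, b₂) ∈ C) : (a₁, b₂) ∈ C := by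
  simpa [prodMed, M₁.med_left_right, M₂.med_right_right] using hC _ ha _ hb (a₁, b₂)

lemma IsHalfspace.exists_eq_preimage_fst_or_snd {h : Set (T₁ × T₂)}
    (hh : IsHalfspace (prodMed M₁.med M₂.med) h) :
    (∃ s, h = Prod.fst ⁻¹' s) ∨ ∃ t, h = Prod.snd ⁻¹' t := by
  by_cases hfst : ∀ a b b', (a, b) ∈ h → (a, b') ∈ h
  · refine .inl ⟨Prod.fst '' h, (subset_preimage_image _ _).antisymm ?_⟩
    rintro ⟨p₁, p₂⟩ ⟨⟨q₁, q₂⟩, hq, rfl : q₁ = p₁⟩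
    exact hfst q₁ q₂ p₂ hq
  · push Not at hfst
    obtain ⟨a, b, b', hb, hb'⟩ := hfst
    refine .inr ⟨Prod.snd '' h, (subset_preimage_image _ _).antisymm ?_⟩
    rintro ⟨p₁, p₂⟩ ⟨⟨q₁, q₂⟩, hq, rfl : q₂ = p₂⟩
    by_contra hp
    exact hh.2.2.2.prodMed_mk_mem hb' hp (hh.2.2.1.prodMed_mk_mem hb hq)

end Product

lemma transverse_of_pentagon {X : Type*} {x : Fin 5 → X} {h : Fin 5 → Set X}
    (hsep : ∀ i, x (i - 1) ∈ (h i)ᶜ ∧ x i ∈ (h i)ᶜ ∧ x (i + 1) ∈ (h i)ᶜ ∧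
      x (i + 2) ∈ h i ∧ x (i + 3) ∈ h i) (i : Fin 5) :
    Transverse (h i) (h (i + 1)) := by
  have e : ∀ j : Fin 5,
      j + 1 + 2 = j + 3 ∧ j + 1 + 1 = j + 2 ∧ j + 1 + 3 = j - 1 ∧ j + 1 - 1 = j := by
    decide
  obtain ⟨hm1, hm2, -, hp1, hp2⟩ := hsep i
  obtain ⟨hm1', -, hm3', hp1', hp2'⟩ := hsep (i + 1)
  obtain ⟨e₁, e₂, e₃, e₄⟩ := e i
  rw [e₁] at hp1'
  rw [e₂] at hm3'
  rw [e₃] at hp2'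
  rw [e₄] at hm1'
  exact ⟨⟨_, hp2, hp1'⟩, ⟨_, hp1, hm3'⟩, ⟨_, hm1, hp2'⟩, ⟨_, hm2, hm1'⟩⟩

lemma Fin.not_two_colorable_five (p q : Fin 5 → Prop) (hcover : ∀ i, p i ∨ q i)
    (hp : ∀ i, p i → ¬ p (i + 1)) (hq : ∀ i, q i → ¬ q (i + 1)) : False := by
  have hpq i (hi : p i) : q (i + 1) := (hcover (i + 1)).resolve_left (hp i hi)
  have hqp i (hi : q i) : p (i + 1) := (hcover (i + 1)).resolve_right (hq i hi)
  rcases hcover 0 with h0 | h0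
  · exact hp 4 (hqp 3 (hpq 2 (hqp 1 (hpq 0 h0)))) h0
  · exact hq 4 (hpq 3 (hqp 2 (hpq 1 (hqp 0 h0)))) h0

/-- a product of two rank-1 median algebras contains no pentagonal
configuration: there is no 5-tuple `x` such that for every `i` (mod 5) some
wall of the product separates `{x (i-1), x i, x (i+1)}` from
`{x (i+2), x (i+3)}`. -/
theorem stmt5 {T₁ T₂ : Type*} (M₁ : MedianAlgebra T₁) (M₂ : MedianAlgebra T₂)
    (h₁ : Rank1 M₁) (h₂ : Rank1 M₂) (x : Fin 5 → T₁ × T₂) :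
    ¬ ∀ i : Fin 5, ∃ h : Set (T₁ × T₂),
        IsHalfspace (prodMed M₁.med M₂.med) h ∧
        x (i - 1) ∈ hᶜ ∧ x i ∈ hᶜ ∧ x (i + 1) ∈ hᶜ ∧
        x (i + 2) ∈ h ∧ x (i + 3) ∈ h := by
  intro H
  choose h hh hsep using H
  have : Nonempty T₁ := ⟨(x 0).1⟩
  have : Nonempty T₂ := ⟨(x 0).2⟩
  refine Fin.not_two_colorable_five (fun i => ∃ s, h i = Prod.fst ⁻¹' s)
    (fun i => ∃ t, h i = Prod.snd ⁻¹' t) (fun i => (hh i).exists_eq_preimage_fst_or_snd) ?_ ?_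
  · rintro i ⟨s, hs⟩ ⟨s', hs'⟩
    have hT := transverse_of_pentagon hsep i
    rw [hs, hs'] at hT
    exact h₁.not_transverse_preimage Prod.fst_surjective (fun _ _ _ => rfl)
      (hs ▸ hh i) (hs' ▸ hh (i + 1)) hT
  · rintro i ⟨t, ht⟩ ⟨t', ht'⟩
    have hT := transverse_of_pentagon hsep i
    rw [ht, ht'] at hT
    exact h₂.not_transverse_preimage Prod.snd_surjective (fun _ _ _ => rfl)
      (ht ▸ hh i) (ht' ▸ hh (i + 1)) hT
end

section
/- Let T₁ and T₂ be rank-1 median algebras and let A be a subset of the product median algebra T₁ × T₂. Then the median subalgebra generated by A equals ℳ(A) := m(A × A × A), i.e., a single application of the median operation to all triples of points of A already yields a median subalgebra. -/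
/-!
Let `w ∉ ℳ(A)`; it suffices to find a median-closed set containing `A` but not `w`.

In a rank-1 median algebra, call `x` and `y` on the same side of `w` if some halfspace contains
both but not `w`. Since no two halfspaces are transverse, this relation is transitive and its
classes are convex. If `x`, `y` are not on the same side of `w`, then `w ∈ [x, y]`: otherwise a
halfspace separating `m x w y` from `w` would contain `x` and `y`. Such separating halfspaces
exist by Zorn's lemma, applied to the convex sets avoiding `w`.

In `T₁ × T₂`, link two points if they are on the same side of `w` in some coordinate. Were three
points of `A` pairwise unlinked, `w` would lie between each two of them in both coordinates,
hence be their median. So a König-type argument covers `A` by two classes, each convex in the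
product, and the union of two convex sets is median-closed.
-/

theorem IsConvexSet.sUnion_of_isChain {X : Type*} {med : X → X → X → X} {c : Set (Set X)}
    (hc : ∀ D ∈ c, IsConvexSet med D) (hchain : IsChain (· ⊆ ·) c) :
    IsConvexSet med (⋃₀ c) := by
  rintro a ⟨D₁, hD₁, ha⟩ b ⟨D₂, hD₂, hb⟩ x
  rcases hchain.total hD₁ hD₂ with h | h
  · exact ⟨D₂, hD₂, hc D₂ hD₂ a (h ha) b hb x⟩
  · exact ⟨D₁, hD₁, hc D₁ hD₁ a ha b (h hb) x⟩

namespace MedianAlgebra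

variable {X : Type*} (M : MedianAlgebra X)

local notation "m" => M.med

theorem med_bac (a b c : X) : m b a c = m a b c := (M.swap a b c).symm

theorem med_bca (a b c : X) : m b c a = m a b c := (M.rot a b c).symm

theorem med_cab (a b c : X) : m c a b = m a b c := M.rot c a b

theorem med_acb (a b c : X) : m a c b = m a b c := (M.swap a c b).trans (M.med_cab a b c)

theorem med_cba (a b c : X) : m c b a = m a b c := (M.swap c b a).trans (M.med_bca a b c)

theorem med_self_mid (a b : X) : m a b a = a := (M.med_acb a a b).trans (M.absorb a b)

theorem med_self_right (a b : X) : m b a a = a := (M.rot b a a).trans (M.absorb a b)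

theorem med_med_right (a b c : X) : m a b (m a b c) = m a b c := by
  simpa only [med_self_mid] using (M.assoc a b a c).symm

/- Fixing a base point `u`, read `m u x y = x` as `x ≤ y` (that is, `x ∈ [u, y]`):
this is a meet-semilattice order whose meet is `m u x y`. -/

theorem med_assoc_at (u x y z : X) : m u (m u x y) z = m u x (m u y z) := by
  simpa only [med_bac] using M.assoc x u y z

theorem le_trans_at {u x y z : X} (hxy : m u x y = x) (hyz : m u y z = y) :
    m u x z = x :=
  calc m u x z = m u (m u x y) z := by rw [hxy]
    _ = m u x y := by rw [med_assoc_at, hyz]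
    _ = x := hxy

theorem le_inf_at {u w y z : X} (hy : m u w y = w) (hz : m u w z = w) :
    m u w (m u y z) = w := by
  rw [← med_assoc_at, hy, hz]

theorem inf_le_left_at (u x y : X) : m u (m u x y) x = m u x y := by
  rw [M.med_acb u x (m u x y)]; exact M.med_med_right u x y

theorem inf_le_right_at (u x y : X) : m u (m u x y) y = m u x y := by
  rw [M.med_acb u y (m u x y), ← M.med_acb u x y]; exact M.med_med_right u y x

theorem med_eq_mid_of_le_at {a y x b : X} (hyx : m a y x = y) (hxb : m a x b = x) :
    m y x b = x :=
  calc m y x b = m b x (m a x y) := by rw [← M.med_cba y x b, ← M.med_acb a x y, hyx]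
    _ = m (m b x a) x y := (M.assoc b x a y).symm
    _ = x := by rw [M.med_cba a x b, hxb, M.absorb]

theorem med_eq_of_between {a b c w : X} (hab : m a w b = w) (hbc : m b w c = w)
    (hac : m a w c = w) : m a b c = w := by
  have hwt : m a w (m a b c) = w := le_inf_at M hab hac
  have hwt' : m b w (m a b c) = w := by
    have := le_inf_at M ((M.med_cba a w b).trans hab) hbc
    rwa [M.med_bac a b c] at this
  have htb : m a (m a b c) b = m a b c := inf_le_left_at M a b c
  calc m a b c = m w (m a b c) b := (med_eq_mid_of_le_at M hwt htb).symm
    _ = w := (M.med_cab _ _ _).symm.trans hwt'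

theorem med_inf_med_eq (c u v x : X) :
    m c (m c u v) (m u v x) = m (m c u x) v (m c u v) := by
  have hs : m (m u v x) c u = m (m c u v) u x := by
    rw [M.med_cab c u (m u v x), ← M.med_bac u v x, ← M.assoc c u v x]
  have hμ : m (m c u v) u x = m (m c u x) u v := by
    calc m (m c u v) u x = m c u (m v u x) := M.assoc c u v x
      _ = m v u (m x u c) := by rw [M.med_cba, M.assoc, M.med_cba]
      _ = m (m c u x) u v := by rw [M.med_cba x u c, M.med_cba]
  calc m c (m c u v) (m u v x) = m (m u v x) c (m u c v) := by
        rw [M.med_bca (m u v x) c, M.med_bac u c v]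
    _ = m (m (m c u x) u v) c v := by rw [← M.assoc, hs, hμ]
    _ = m (m c u x) v (m u v c) := by
        rw [M.med_acb (m (m c u x) u v) v c, M.med_acb (m c u x) v u, M.assoc]
    _ = m (m c u x) v (m c u v) := by rw [M.med_bca c u v]

theorem inf_le_med_at (c u v x : X) : m c (m c u v) (m u v x) = m c u v := by
  have hTv := inf_le_left_at M v (m c u v) (m c u x)
  rw [M.med_bca (m c u x) v, ← med_inf_med_eq] at hTv
  set μ := m c u v
  set T := m c μ (m u v x)
  have hμv : m v μ u = μ := by
    have h := inf_le_left_at M v u c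
    rwa [M.med_cba c u v] at h
  have hTc : m c T μ = T := inf_le_left_at M c μ (m u v x)
  have hTu : m c T u = T := le_trans_at M hTc (inf_le_left_at M c u v)
  have hTv' : m c T v = T := le_trans_at M hTc (inf_le_right_at M c u v)
  have hTuv : m u T v = T := (M.med_cba u T v).symm.trans (le_trans_at M hTv hμv)
  exact (med_eq_of_between M hTu hTuv hTv').symm

theorem le_med_at {c w u v : X} (hu : m c w u = w) (hv : m c w v = w) (x : X) :
    m c w (m u v x) = w :=
  le_trans_at M (le_inf_at M hu hv) (inf_le_med_at M c u v x)

theorem between_med_of_between {u v w k₁ k₂ : X} (hu : m u w k₁ = w) (hv : m v w k₂ = w)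
    (x : X) : m (m u v x) w (m k₁ k₂ w) = w := by
  have hc₁ : m (m k₁ k₂ w) w u = w := by
    rw [M.med_cba u w, M.med_acb k₁ w k₂, ← M.assoc, hu, M.absorb]
  have hc₂ : m (m k₁ k₂ w) w v = w := by
    rw [M.med_cba v w, ← M.med_bac k₁ k₂ w, M.med_acb k₂ w k₁, ← M.assoc, hv, M.absorb]
  rw [M.med_cba (m k₁ k₂ w) w]
  exact le_med_at M hc₁ hc₂ x

theorem med_mid_inf_at (u t₁ t₂ x : X) :
    m (m u (m t₁ t₂ x) t₁) (m t₁ t₂ x) t₂ = m t₁ t₂ x := by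
  have h₁ := M.med_med_right t₂ t₁ x
  rw [M.med_bac t₁ t₂ x] at h₁
  have h₂ := inf_le_med_at M t₂ t₁ (m t₁ t₂ x) u
  rw [h₁] at h₂
  rwa [M.med_cba t₁ (m t₁ t₂ x) u, M.med_cba t₂ (m t₁ t₂ x)]

theorem med_mid_of_le_left_at {u t₁ k₁ t₂ m' : X} (h : m (m u m' t₁) m' t₂ = m')
    (ht : m u t₁ k₁ = t₁) : m (m u m' k₁) m' t₂ = m' := by
  have hm' : m u (m u m' t₁) m' = m u m' t₁ := inf_le_left_at M u m' t₁
  have hk : m u (m u m' t₁) k₁ = m u m' t₁ := le_trans_at M (inf_le_right_at M u m' t₁) ht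
  have hle : m (m u m' t₁) (m u m' k₁) m' = m u m' k₁ :=
    med_eq_mid_of_le_at M (le_inf_at M hm' hk) (inf_le_left_at M u m' k₁)
  exact med_eq_mid_of_le_at M hle h

theorem med_mid_of_le_right_at {u a m' t₂ k₂ : X} (ha : m u a m' = a) (h : m a m' t₂ = m')
    (ht : m u t₂ k₂ = t₂) : m a m' k₂ = m' := by
  have hPu : m k₂ (m k₂ m' t₂) u = m k₂ m' t₂ :=
    le_trans_at M (inf_le_right_at M k₂ m' t₂) ((M.med_cba u t₂ k₂).trans ht)
  have hua : m k₂ (m k₂ u m') a = m k₂ u m' := by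
    have := inf_le_med_at M k₂ u m' a
    rwa [M.med_acb u a m', ha] at this
  have hPa : m k₂ (m k₂ m' t₂) a = m k₂ m' t₂ :=
    le_trans_at M (le_inf_at M hPu (inf_le_left_at M k₂ m' t₂)) hua
  have hm'P : m a m' (m k₂ m' t₂) = m' := by
    rw [M.med_cba t₂ m' k₂, ← M.assoc, h, M.absorb]
  exact le_trans_at M hm'P ((M.med_cba _ _ _).symm.trans hPa)

theorem med_le_med_at {u t₁ k₁ t₂ k₂ : X} (h₁ : m u t₁ k₁ = t₁) (h₂ : m u t₂ k₂ = t₂)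
    (x : X) : m u (m t₁ t₂ x) (m k₁ k₂ (m t₁ t₂ x)) = m t₁ t₂ x := by
  have hk₁ := med_mid_of_le_left_at M (med_mid_inf_at M u t₁ t₂ x) h₁
  have hk₂ := med_mid_of_le_right_at M (inf_le_left_at M u _ k₁) hk₁ h₂
  rwa [M.med_acb k₁ _ k₂, ← M.assoc]

theorem isConvexSet_singleton (x : X) : IsConvexSet m {x} := by
  intro a ha b hb t
  rw [Set.mem_singleton_iff] at ha hb ⊢
  rw [ha, hb, M.absorb]

theorem isConvexSet_join {K : Set X} (hK : IsConvexSet m K) (p : X) :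
    IsConvexSet m {t | ∃ k ∈ K, m p t k = t} := by
  rintro t₁ ⟨k₁, hk₁, ht₁⟩ t₂ ⟨k₂, hk₂, ht₂⟩ x
  exact ⟨_, hK k₁ hk₁ k₂ hk₂ _, M.med_le_med_at ht₁ ht₂ x⟩

theorem exists_isHalfspace_of_notMem {C : Set X} (hC : IsConvexSet m C) (hne : C.Nonempty)
    {w : X} (hw : w ∉ C) : ∃ K, IsHalfspace m K ∧ C ⊆ K ∧ w ∉ K := by
  obtain ⟨K, hCK, ⟨hK, hwK⟩, hmax⟩ := zorn_subset_nonempty {D | IsConvexSet m D ∧ w ∉ D}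
    (fun c hc hchain _ => ⟨⋃₀ c,
      ⟨IsConvexSet.sUnion_of_isChain (fun D hD => (hc hD).1) hchain,
        fun ⟨D, hD, hwD⟩ => (hc hD).2 hwD⟩,
      fun _ => Set.subset_sUnion_of_mem⟩) C ⟨hC, hw⟩
  obtain ⟨k₀, hk₀⟩ := hne.mono hCK
  -- The join of `K` with a point `p ∉ K` is convex and strictly larger than `K`,
  -- so by maximality it contains `w`.
  have hjoin : ∀ p ∉ K, ∃ k ∈ K, m p w k = w := by
    intro p hp
    by_contra hwJ
    have hKJ : K ⊆ {t | ∃ k ∈ K, m p t k = t} := fun k hk => ⟨k, hk, M.med_self_right k p⟩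
    exact hp (hmax ⟨M.isConvexSet_join hK p, hwJ⟩ hKJ ⟨k₀, hk₀, M.absorb p k₀⟩)
  refine ⟨K, ⟨⟨k₀, hk₀⟩, ⟨w, hwK⟩, hK, ?_⟩, hCK, hwK⟩
  intro u hu v hv x hs
  obtain ⟨k₁, hk₁, hu⟩ := hjoin u hu
  obtain ⟨k₂, hk₂, hv⟩ := hjoin v hv
  have := hK _ hs _ (hK k₁ hk₁ k₂ hk₂ w) w
  rw [M.med_acb, M.between_med_of_between hu hv x] at this
  exact hwK this

theorem exists_isHalfspace_of_ne {x w : X} (h : x ≠ w) :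
    ∃ K, IsHalfspace m K ∧ x ∈ K ∧ w ∉ K := by
  obtain ⟨K, hK, hxK, hwK⟩ := M.exists_isHalfspace_of_notMem (M.isConvexSet_singleton x)
    (Set.singleton_nonempty x) h.symm
  exact ⟨K, hK, hxK rfl, hwK⟩

def SameSide (w x y : X) : Prop :=
  ∃ h : Set X, IsHalfspace m h ∧ x ∈ h ∧ y ∈ h ∧ w ∉ h

variable {M}

theorem SameSide.symm {w x y : X} (h : M.SameSide w x y) : M.SameSide w y x :=
  let ⟨h, hh, hx, hy, hw⟩ := h
  ⟨h, hh, hy, hx, hw⟩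

theorem not_sameSide_self_left (w y : X) : ¬M.SameSide w w y :=
  fun ⟨_, _, hw, _, hw'⟩ => hw' hw

theorem med_eq_of_not_sameSide {w x y : X} (h : ¬M.SameSide w x y) : m x w y = w := by
  by_contra hne
  obtain ⟨K, hK, hgK, hwK⟩ := M.exists_isHalfspace_of_ne hne
  refine h ⟨K, hK, by_contra fun hx => ?_, by_contra fun hy => ?_, hwK⟩
  · exact hK.2.2.2 x hx w hwK y hgK
  · have := hK.2.2.2 y hy w hwK x
    rw [M.med_cba x w y] at this
    exact this hgK

theorem med_eq_of_not_sameSide₃ {w a b c : X} (hab : ¬M.SameSide w a b)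
    (hbc : ¬M.SameSide w b c) (hac : ¬M.SameSide w a c) : m a b c = w :=
  M.med_eq_of_between (med_eq_of_not_sameSide hab) (med_eq_of_not_sameSide hbc)
    (med_eq_of_not_sameSide hac)

theorem Rank1.subset_or_subset (hr : Rank1 M) {h k : Set X} (hh : IsHalfspace m h)
    (hk : IsHalfspace m k) {x w : X} (hx : x ∈ h ∩ k) (hwh : w ∉ h) (hwk : w ∉ k) :
    h ⊆ k ∨ k ⊆ h := by
  by_contra hc
  simp only [not_or, Set.not_subset] at hc
  obtain ⟨⟨y, hyh, hyk⟩, z, hzk, hzh⟩ := hc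
  exact hr h k hh hk ⟨⟨x, hx⟩, ⟨y, hyh, hyk⟩, ⟨z, hzh, hzk⟩, ⟨w, hwh, hwk⟩⟩

theorem Rank1.sameSide_trans (hr : Rank1 M) {w x y z : X} (hxy : M.SameSide w x y)
    (hyz : M.SameSide w y z) : M.SameSide w x z := by
  obtain ⟨h, hh, hx, hy, hwh⟩ := hxy
  obtain ⟨k, hk, hy', hz, hwk⟩ := hyz
  rcases Rank1.subset_or_subset hr hh hk ⟨hy, hy'⟩ hwh hwk with hhk | hkh
  · exact ⟨k, hk, hhk hx, hz, hwk⟩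
  · exact ⟨h, hh, hx, hkh hz, hwh⟩

theorem Rank1.isConvexSet_sameSide (hr : Rank1 M) (w x : X) :
    IsConvexSet m {t | M.SameSide w t x} := by
  rintro u₁ ⟨h, hh, hu₁, hx, hwh⟩ u₂ ⟨k, hk, hu₂, hx', hwk⟩ t
  rcases Rank1.subset_or_subset hr hh hk ⟨hx, hx'⟩ hwh hwk with hhk | hkh
  · exact ⟨k, hk, hk.2.2.1 u₁ (hhk hu₁) u₂ hu₂ t, hx', hwk⟩
  · exact ⟨h, hh, hh.2.2.1 u₁ hu₁ u₂ (hkh hu₂) t, hx, hwh⟩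

end MedianAlgebra

section TwoRelations

variable {P : Type*} {S₁ S₂ : P → P → Prop} [Std.Symm S₁] [IsTrans P S₁] [Std.Symm S₂]
  [IsTrans P S₂] {A : Set P}

theorem two_class_cover_of_unlinked_pair
    (hA : ∀ a ∈ A, ∀ b ∈ A, ∀ c ∈ A, S₁ a b ∨ S₂ a b ∨ S₁ a c ∨ S₂ a c ∨ S₁ b c ∨ S₂ b c)
    {a b c : P} (ha : a ∈ A) (hb : b ∈ A) (hc : c ∈ A) (hab₁ : ¬S₁ a b) (hab₂ : ¬S₂ a b)
    (hca₁ : ¬S₁ c a) (hcb₁ : ¬S₁ c b) (hca₂ : S₂ c a) :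
    (∀ d ∈ A, S₂ d a ∨ S₁ d b) ∨ ∀ d ∈ A, S₂ d a ∨ S₂ d b := by
  by_contra! h
  obtain ⟨⟨e, he, hea, heb⟩, f, hf, hfa, hfb⟩ := h
  have : ∀ x y, S₁ x y → S₁ y x := Std.Symm.symm
  have : ∀ x y, S₂ x y → S₂ y x := Std.Symm.symm
  have : ∀ x y z, S₁ x y → S₁ y z → S₁ x z := IsTrans.trans
  have : ∀ x y z, S₂ x y → S₂ y z → S₂ x z := IsTrans.trans
  -- Transitivity makes one of these four triples pairwise unlinked, according as `f` is
  -- linked to `a` or to `b`, and `e` to `a` or to `b`.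
  have := hA c hc f hf b hb
  have := hA a ha e he f hf
  have := hA c hc e he b hb
  have := hA c hc e he f hf
  have := hA a ha b hb e he
  have := hA a ha b hb f hf
  clear hA
  grind

/-- Reading `S₁`, `S₂` as "same row" and "same column", this is König's theorem for
matchings of size two: if no three points of `A` are pairwise unlinked, two lines cover `A`. -/
theorem exists_two_class_cover
    (hA : ∀ a ∈ A, ∀ b ∈ A, ∀ c ∈ A, S₁ a b ∨ S₂ a b ∨ S₁ a c ∨ S₂ a c ∨ S₁ b c ∨ S₂ b c)
    (hne : A.Nonempty) :
    ∃ x y, ∃ R₁ ∈ ({S₁, S₂} : Set (P → P → Prop)), ∃ R₂ ∈ ({S₁, S₂} : Set (P → P → Prop)),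
      ∀ c ∈ A, R₁ c x ∨ R₂ c y := by
  by_cases hpair : ∃ a ∈ A, ∃ b ∈ A, ¬S₁ a b ∧ ¬S₂ a b
  · obtain ⟨a, ha, b, hb, hab₁, hab₂⟩ := hpair
    by_cases hrows : ∀ c ∈ A, S₁ c a ∨ S₁ c b
    · exact ⟨a, b, S₁, Or.inl rfl, S₁, Or.inl rfl, hrows⟩
    push Not at hrows
    obtain ⟨c, hc, hca₁, hcb₁⟩ := hrows
    have hc₂ : S₂ c a ∨ S₂ c b := by
      have : ∀ x y, S₂ x y → S₂ y x := Std.Symm.symm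
      have := hA a ha b hb c hc
      grind
    rcases hc₂ with hca₂ | hcb₂
    · rcases two_class_cover_of_unlinked_pair hA ha hb hc hab₁ hab₂ hca₁ hcb₁ hca₂ with h | h
      · exact ⟨a, b, S₂, Or.inr rfl, S₁, Or.inl rfl, h⟩
      · exact ⟨a, b, S₂, Or.inr rfl, S₂, Or.inr rfl, h⟩
    · rcases two_class_cover_of_unlinked_pair hA hb ha hc (mt (symm_of S₁) hab₁)
        (mt (symm_of S₂) hab₂) hcb₁ hca₁ hcb₂ with h | h
      · exact ⟨b, a, S₂, Or.inr rfl, S₁, Or.inl rfl, h⟩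
      · exact ⟨b, a, S₂, Or.inr rfl, S₂, Or.inr rfl, h⟩
  · push Not at hpair
    obtain ⟨a, ha⟩ := hne
    exact ⟨a, a, S₁, Or.inl rfl, S₂, Or.inr rfl,
      fun c hc => (em (S₁ c a)).imp_right (hpair c hc a ha)⟩

end TwoRelations

def IsMedianClosed {X : Type*} (med : X → X → X → X) (S : Set X) : Prop :=
  ∀ a ∈ S, ∀ b ∈ S, ∀ c ∈ S, med a b c ∈ S

section Span

variable {X : Type*} {med : X → X → X → X} {A : Set X}

theorem medSpan_subset {S : Set X} (hAS : A ⊆ S) (hS : IsMedianClosed med S) :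
    medSpan med A ⊆ S :=
  Set.sInter_subset_of_mem ⟨hAS, hS⟩

theorem MSet_subset_medSpan : MSet med A ⊆ medSpan med A := by
  rintro _ ⟨a, ha, b, hb, c, hc, rfl⟩ S ⟨hAS, hS⟩
  exact hS a (hAS ha) b (hAS hb) c (hAS hc)

theorem nonempty_of_mem_medSpan {w : X} (hw : w ∈ medSpan med A) : A.Nonempty := by
  rw [Set.nonempty_iff_ne_empty]
  rintro rfl
  exact medSpan_subset (S := ∅) subset_rfl (fun _ ha => ha.elim) hw

end Span

theorem IsConvexSet.preimage_fst {X Y : Type*} {m₁ : X → X → X → X} {m₂ : Y → Y → Y → Y}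
    {C : Set X} (hC : IsConvexSet m₁ C) : IsConvexSet (prodMed m₁ m₂) (Prod.fst ⁻¹' C) :=
  fun a ha b hb x => hC a.1 ha b.1 hb x.1

theorem IsConvexSet.preimage_snd {X Y : Type*} {m₁ : X → X → X → X} {m₂ : Y → Y → Y → Y}
    {C : Set Y} (hC : IsConvexSet m₂ C) : IsConvexSet (prodMed m₁ m₂) (Prod.snd ⁻¹' C) :=
  fun a ha b hb x => hC a.2 ha b.2 hb x.2

namespace MedianAlgebra

variable {X Y : Type*}

def prod (M₁ : MedianAlgebra X) (M₂ : MedianAlgebra Y) : MedianAlgebra (X × Y) where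
  med := prodMed M₁.med M₂.med
  absorb a b := Prod.ext (M₁.absorb a.1 b.1) (M₂.absorb a.2 b.2)
  rot a b c := Prod.ext (M₁.rot a.1 b.1 c.1) (M₂.rot a.2 b.2 c.2)
  swap a b c := Prod.ext (M₁.swap a.1 b.1 c.1) (M₂.swap a.2 b.2 c.2)
  assoc a x b c := Prod.ext (M₁.assoc a.1 x.1 b.1 c.1) (M₂.assoc a.2 x.2 b.2 c.2)

variable (M : MedianAlgebra X)

/-- Of any three points of `C ∪ D`, two lie in the same one of the two convex sets. -/
theorem isMedianClosed_union {C D : Set X} (hC : IsConvexSet M.med C)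
    (hD : IsConvexSet M.med D) : IsMedianClosed M.med (C ∪ D) := by
  rintro a (ha | ha) b (hb | hb) c (hc | hc)
  · exact Or.inl (hC a ha b hb c)
  · exact Or.inl (hC a ha b hb c)
  · exact Or.inl (M.med_acb a b c ▸ hC a ha c hc b)
  · exact Or.inr (M.med_bca a b c ▸ hD b hb c hc a)
  · exact Or.inl (M.med_bca a b c ▸ hC b hb c hc a)
  · exact Or.inr (M.med_acb a b c ▸ hD a ha c hc b)
  · exact Or.inr (hD a ha b hb c)
  · exact Or.inr (hD a ha b hb c)

theorem exists_convex_cover_of_notMem_MSet {M₁ : MedianAlgebra X} {M₂ : MedianAlgebra Y}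
    (h₁ : Rank1 M₁) (h₂ : Rank1 M₂) {A : Set (X × Y)} (hA : A.Nonempty) {w : X × Y}
    (hw : w ∉ MSet (prodMed M₁.med M₂.med) A) :
    ∃ C D, IsConvexSet (prodMed M₁.med M₂.med) C ∧ IsConvexSet (prodMed M₁.med M₂.med) D ∧
      A ⊆ C ∪ D ∧ w ∉ C ∪ D := by
  let S₁ : X × Y → X × Y → Prop := fun p q => M₁.SameSide w.1 p.1 q.1
  let S₂ : X × Y → X × Y → Prop := fun p q => M₂.SameSide w.2 p.2 q.2
  have : Std.Symm S₁ := ⟨fun _ _ => SameSide.symm⟩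
  have : Std.Symm S₂ := ⟨fun _ _ => SameSide.symm⟩
  have : IsTrans _ S₁ := ⟨fun _ _ _ => Rank1.sameSide_trans h₁⟩
  have : IsTrans _ S₂ := ⟨fun _ _ _ => Rank1.sameSide_trans h₂⟩
  have hlinked : ∀ a ∈ A, ∀ b ∈ A, ∀ c ∈ A,
      S₁ a b ∨ S₂ a b ∨ S₁ a c ∨ S₂ a c ∨ S₁ b c ∨ S₂ b c := by
    intro a ha b hb c hc
    by_contra! h
    exact hw ⟨a, ha, b, hb, c, hc, Prod.ext (med_eq_of_not_sameSide₃ h.1 h.2.2.2.2.1 h.2.2.1)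
      (med_eq_of_not_sameSide₃ h.2.1 h.2.2.2.2.2 h.2.2.2.1)⟩
  have hclass : ∀ R ∈ ({S₁, S₂} : Set _), ∀ z,
      IsConvexSet (prodMed M₁.med M₂.med) {c | R c z} ∧ w ∉ {c | R c z} := by
    rintro R (rfl | rfl) z
    · exact ⟨(Rank1.isConvexSet_sameSide h₁ w.1 z.1).preimage_fst,
        not_sameSide_self_left _ _⟩
    · exact ⟨(Rank1.isConvexSet_sameSide h₂ w.2 z.2).preimage_snd,
        not_sameSide_self_left _ _⟩
  obtain ⟨x, y, R₁, hR₁, R₂, hR₂, hcover⟩ := exists_two_class_cover hlinked hA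
  obtain ⟨hC, hwC⟩ := hclass R₁ hR₁ x
  obtain ⟨hD, hwD⟩ := hclass R₂ hR₂ y
  exact ⟨_, _, hC, hD, hcover, fun h => h.elim hwC hwD⟩

end MedianAlgebra

/-- if `T₁`, `T₂` are rank-1 median algebras and
`A ⊆ T₁ × T₂`, then the median subalgebra generated by `A` equals
`ℳ(A) = med(A × A × A)`. -/
theorem stmt6 {T₁ T₂ : Type*} (M₁ : MedianAlgebra T₁) (M₂ : MedianAlgebra T₂)
    (h₁ : Rank1 M₁) (h₂ : Rank1 M₂) (A : Set (T₁ × T₂)) :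
    medSpan (prodMed M₁.med M₂.med) A = MSet (prodMed M₁.med M₂.med) A := by
  refine subset_antisymm (fun w hw => ?_) MSet_subset_medSpan
  by_contra hwM
  obtain ⟨C, D, hC, hD, hAC, hwC⟩ :=
    MedianAlgebra.exists_convex_cover_of_notMem_MSet h₁ h₂ (nonempty_of_mem_medSpan hw) hwM
  exact hwC (medSpan_subset hAC ((M₁.prod M₂).isMedianClosed_union hC hD) hw)
end

section
/- Let Q be a finitely generated group with word metric d associated to a finite generating set, and let φ ∈ Aut(Q). Then: (a) if L is a Lipschitz constant for φ with respect to d, then d(g, φ(g)) ≤ (1+L)·d(g, Fix φ) for every g ∈ Q; (b) there exists a function ζ: ℕ → ℕ such that d(g, Fix φ) ≤ ζ(d(g, φ(g))) for every g ∈ Q. -/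
/-!
(a) If `h` is a fixed point nearest to `g`, then
`d(g, φ g) ≤ d(g, h) + d(φ h, φ g) ≤ (1 + L) · d(g, h)`.

(b) `d(g, Fix φ)` depends only on the twisted displacement `g⁻¹ φ(g)`: two elements with the
same displacement differ on the left by a fixed element, and left multiplication by a fixed
element preserves the distance to `Fix φ`. As `|g⁻¹ φ(g)|_S = d(g, φ g)` and balls are finite,
`ζ n` can be taken to be the maximum of `d(·, Fix φ)` over the finitely many displacements of
length at most `n`.
-/

/-- The word length of `g` with respect to a generating set `S`: the least
length of a word in `S ∪ S⁻¹` representing `g`. -/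
noncomputable def wordLength {G : Type*} [Group G] (S : Set G) (g : G) : ℕ :=
  sInf {n : ℕ | ∃ l : List G, l.length = n ∧ (∀ x ∈ l, x ∈ S ∨ x⁻¹ ∈ S) ∧ l.prod = g}

/-- The left-invariant word metric `d(a,b) = |a⁻¹ b|_S`. -/
noncomputable def wordDist {G : Type*} [Group G] (S : Set G) (a b : G) : ℕ :=
  wordLength S (a⁻¹ * b)

/-- The word distance from `g` to the fixed subgroup `Fix φ`. -/
noncomputable def distToFix {G : Type*} [Group G] (S : Set G) (φ : G ≃* G) (g : G) : ℕ :=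
  sInf {n : ℕ | ∃ h : G, φ h = h ∧ wordDist S g h = n}

lemma Function.FactorsThrough.exists_le_comp {α β : Type*} {f : α → ℕ} {D : α → β}
    (hf : f.FactorsThrough D) (ℓ : β → ℕ) (hℓ : ∀ n, {b | ℓ b ≤ n}.Finite) :
    ∃ ζ : ℕ → ℕ, ∀ a, f a ≤ ζ (ℓ (D a)) := by
  refine ⟨fun n => (hℓ n).toFinset.sup (Function.extend D f 0), fun a => ?_⟩
  rw [← hf.extend_apply 0 a]
  exact Finset.le_sup (by simp)

section WordMetric

variable {G : Type*} [Group G] {S : Set G}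

lemma exists_list_prod_eq_of_closure_eq_top (hS : Subgroup.closure S = ⊤) (g : G) :
    ∃ l : List G, (∀ x ∈ l, x ∈ S ∨ x⁻¹ ∈ S) ∧ l.prod = g := by
  have hg : g ∈ Submonoid.closure (S ∪ S⁻¹) := by
    rw [← Subgroup.closure_toSubmonoid, hS]
    trivial
  simpa using Submonoid.exists_list_of_mem_closure hg

lemma wordLength_prod_le_length {l : List G} (hl : ∀ x ∈ l, x ∈ S ∨ x⁻¹ ∈ S) :
    wordLength S l.prod ≤ l.length :=
  Nat.sInf_le ⟨l, rfl, hl, rfl⟩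

lemma exists_list_length_eq_wordLength (hS : Subgroup.closure S = ⊤) (g : G) :
    ∃ l : List G, l.length = wordLength S g ∧ (∀ x ∈ l, x ∈ S ∨ x⁻¹ ∈ S) ∧ l.prod = g := by
  obtain ⟨l, hl, rfl⟩ := exists_list_prod_eq_of_closure_eq_top hS g
  exact Nat.sInf_mem (s := {n | ∃ l' : List G, l'.length = n ∧ (∀ x ∈ l', x ∈ S ∨ x⁻¹ ∈ S) ∧
    l'.prod = l.prod}) ⟨l.length, l, rfl, hl, rfl⟩

lemma wordLength_mul_le (hS : Subgroup.closure S = ⊤) (a b : G) :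
    wordLength S (a * b) ≤ wordLength S a + wordLength S b := by
  obtain ⟨l₁, hlen₁, hl₁, rfl⟩ := exists_list_length_eq_wordLength hS a
  obtain ⟨l₂, hlen₂, hl₂, rfl⟩ := exists_list_length_eq_wordLength hS b
  rw [← hlen₁, ← hlen₂, ← List.length_append, ← List.prod_append]
  exact wordLength_prod_le_length (List.forall_mem_append.2 ⟨hl₁, hl₂⟩)

lemma wordLength_inv_le (hS : Subgroup.closure S = ⊤) (g : G) :
    wordLength S g⁻¹ ≤ wordLength S g := by
  obtain ⟨l, hlen, hl, rfl⟩ := exists_list_length_eq_wordLength hS g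
  rw [← hlen, List.prod_inv_reverse]
  refine (wordLength_prod_le_length ?_).trans (by simp)
  simp only [List.mem_reverse, List.mem_map]
  rintro _ ⟨x, hx, rfl⟩
  simpa [or_comm] using hl x hx

lemma wordLength_inv (hS : Subgroup.closure S = ⊤) (g : G) :
    wordLength S g⁻¹ = wordLength S g :=
  (wordLength_inv_le hS g).antisymm (by simpa using wordLength_inv_le hS g⁻¹)

lemma finite_setOf_wordLength_le (hfin : S.Finite) (hS : Subgroup.closure S = ⊤) (n : ℕ) :
    {g : G | wordLength S g ≤ n}.Finite := by
  have : Finite ↥(S ∪ S⁻¹) := (hfin.union hfin.inv).to_subtype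
  refine ((List.finite_length_le ↥(S ∪ S⁻¹) n).image fun l => (l.map (↑)).prod).subset ?_
  intro g hg
  obtain ⟨l, hlen, hl, rfl⟩ := exists_list_length_eq_wordLength hS g
  lift l to List ↥(S ∪ S⁻¹) using (by simpa using hl)
  refine ⟨l, ?_, rfl⟩
  rw [List.length_map] at hlen
  exact hlen.trans_le hg

lemma wordDist_comm (hS : Subgroup.closure S = ⊤) (a b : G) :
    wordDist S a b = wordDist S b a := by
  rw [wordDist, ← wordLength_inv hS, mul_inv_rev, inv_inv, wordDist]

lemma wordDist_triangle (hS : Subgroup.closure S = ⊤) (a b c : G) :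
    wordDist S a c ≤ wordDist S a b + wordDist S b c := by
  simpa only [wordDist, mul_assoc, mul_inv_cancel_left] using
    wordLength_mul_le hS (a⁻¹ * b) (b⁻¹ * c)

lemma wordDist_mul_left (k a b : G) : wordDist S (k * a) (k * b) = wordDist S a b := by
  simp only [wordDist, mul_inv_rev, mul_assoc, inv_mul_cancel_left]

end WordMetric

section DistToFix

variable {G : Type*} [Group G] {S : Set G} (φ : G ≃* G)

lemma exists_fixed_wordDist_eq_distToFix (g : G) :
    ∃ h, φ h = h ∧ wordDist S g h = distToFix S φ g :=
  Nat.sInf_mem (s := {n | ∃ h, φ h = h ∧ wordDist S g h = n}) ⟨_, 1, map_one φ, rfl⟩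

lemma distToFix_le_wordDist {g h : G} (hh : φ h = h) : distToFix S φ g ≤ wordDist S g h :=
  Nat.sInf_le ⟨h, hh, rfl⟩

lemma distToFix_mul_le {k : G} (hk : φ k = k) (g : G) :
    distToFix S φ (k * g) ≤ distToFix S φ g := by
  obtain ⟨h, hh, hd⟩ := exists_fixed_wordDist_eq_distToFix (S := S) φ g
  calc distToFix S φ (k * g) ≤ wordDist S (k * g) (k * h) :=
        distToFix_le_wordDist φ (by rw [map_mul, hk, hh])
    _ = distToFix S φ g := by rw [wordDist_mul_left, hd]

lemma distToFix_mul_of_fixed {k : G} (hk : φ k = k) (g : G) :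
    distToFix S φ (k * g) = distToFix S φ g :=
  (distToFix_mul_le φ hk g).antisymm <| by
    simpa using distToFix_mul_le φ (k := k⁻¹) (by rw [map_inv, hk]) (k * g)

lemma distToFix_factorsThrough_inv_mul_apply :
    (distToFix S φ).FactorsThrough fun g => g⁻¹ * φ g := by
  intro g₁ g₂ h
  rw [inv_mul_eq_iff_eq_mul] at h
  have hk : φ (g₁ * g₂⁻¹) = g₁ * g₂⁻¹ := by
    rw [map_mul, map_inv, h]
    group
  rw [← distToFix_mul_of_fixed φ hk g₂, inv_mul_cancel_right]

lemma wordDist_apply_le_distToFix (hS : Subgroup.closure S = ⊤) {L : ℕ}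
    (hL : ∀ a b, wordDist S (φ a) (φ b) ≤ L * wordDist S a b) (g : G) :
    wordDist S g (φ g) ≤ (1 + L) * distToFix S φ g := by
  obtain ⟨h, hh, hd⟩ := exists_fixed_wordDist_eq_distToFix (S := S) φ g
  calc wordDist S g (φ g) ≤ wordDist S g h + wordDist S (φ h) (φ g) := by
        rw [hh]
        exact wordDist_triangle hS g h (φ g)
    _ ≤ wordDist S g h + L * wordDist S g h := by
        grw [hL, wordDist_comm hS h g]
    _ = (1 + L) * distToFix S φ g := by
        rw [hd]
        ring

end DistToFix

/-- for a finitely generated group with word metric `d` and an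
automorphism `φ`: (a) if `L` is a Lipschitz constant for `φ`, then
`d(g, φ g) ≤ (1 + L) · d(g, Fix φ)` for every `g`; (b) there is a function
`ζ : ℕ → ℕ` with `d(g, Fix φ) ≤ ζ (d(g, φ g))` for every `g`. -/
theorem stmt11 {G : Type*} [Group G] (S : Finset G)
    (hgen : Subgroup.closure (S : Set G) = ⊤) (φ : G ≃* G) :
    (∀ L : ℕ,
      (∀ a b : G, wordDist (S : Set G) (φ a) (φ b) ≤ L * wordDist (S : Set G) a b) →
      ∀ g : G, wordDist (S : Set G) g (φ g) ≤ (1 + L) * distToFix (S : Set G) φ g) ∧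
    (∃ ζ : ℕ → ℕ, ∀ g : G,
      distToFix (S : Set G) φ g ≤ ζ (wordDist (S : Set G) g (φ g))) :=
  ⟨fun _ hL => wordDist_apply_le_distToFix φ hgen hL,
    (distToFix_factorsThrough_inv_mul_apply φ).exists_le_comp (wordLength (S : Set G))
      (finite_setOf_wordLength_le S.finite_toSet hgen)⟩
end

section
/- Let Ω be a countable set and μ a probability measure on Ω with μ({ω}) > 0 for every ω ∈ Ω. Let 𝒞 ⊆ L¹(Ω,μ) be a cone (closed under addition and under multiplication by nonnegative scalars) that is closed in the L¹-norm topology, and suppose there exists c > 0 such that ‖f‖_∞ ≤ c·‖f‖₁ for all f ∈ 𝒞. Then the set {f ∈ 𝒞 : ‖f‖₁ = 1} is compact in the L¹-norm topology. -/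
/-!
On the unit sphere of `C` the bound gives `|f ω| ≤ c` for every `ω`, so a sequence there lies in
the cube `[-c, c]^Ω`, which is sequentially compact because `Ω` is countable. A pointwise
convergent subsequence converges in L¹ by dominated convergence (constants are integrable for a
finite measure), and its limit stays in the sphere of `C`, which is closed.
-/

open MeasureTheory Filter Topology

section

variable {Ω E : Type*} [MeasurableSpace Ω] {μ : Measure Ω} [NormedAddCommGroup E]

theorem memLp_of_tendsto_ae_of_norm_le [IsFiniteMeasure μ] {p : ENNReal} {F : ℕ → Ω → E}
    {g : Ω → E} {c : ℝ} (hF : ∀ n, AEStronglyMeasurable (F n) μ)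
    (hbound : ∀ n, ∀ᵐ ω ∂μ, ‖F n ω‖ ≤ c)
    (hlim : ∀ᵐ ω ∂μ, Tendsto (fun n => F n ω) atTop (𝓝 (g ω))) : MemLp g p μ := by
  refine .of_bound (aestronglyMeasurable_of_tendsto_ae atTop hF hlim) c ?_
  filter_upwards [ae_all_iff.mpr hbound, hlim] with ω hω hωlim
  exact le_of_tendsto' hωlim.norm hω

theorem Lp.tendsto_toLp_of_tendsto_ae_of_norm_le [IsFiniteMeasure μ] {F : ℕ → Lp E 1 μ}
    {g : Ω → E} {c : ℝ} (hbound : ∀ n, ∀ᵐ ω ∂μ, ‖F n ω‖ ≤ c)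
    (hlim : ∀ᵐ ω ∂μ, Tendsto (fun n => F n ω) atTop (𝓝 (g ω))) :
    Tendsto F atTop (𝓝 ((memLp_of_tendsto_ae_of_norm_le (fun n => (Lp.memLp (F n)).1)
      hbound hlim).toLp g)) := by
  rw [Lp.tendsto_Lp_iff_tendsto_eLpNorm]
  simp only [eLpNorm_one_eq_lintegral_enorm, Pi.sub_apply, ← ofReal_norm]
  exact tendsto_lintegral_norm_of_dominated_convergence (fun n => (Lp.memLp (F n)).1)
    (integrable_const c).hasFiniteIntegral hbound hlim

end

theorem exists_strictMono_forall_tendsto_of_norm_le {Ω E : Type*} [Countable Ω]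
    [NormedAddCommGroup E] [ProperSpace E] {u : ℕ → Ω → E} {c : ℝ}
    (hu : ∀ n ω, ‖u n ω‖ ≤ c) :
    ∃ g : Ω → E, ∃ φ : ℕ → ℕ, StrictMono φ ∧
      ∀ ω, Tendsto (fun n => u (φ n) ω) atTop (𝓝 (g ω)) := by
  have hcube : IsSeqCompact (Set.univ.pi fun _ : Ω => Metric.closedBall (0 : E) c) :=
    (isCompact_univ_pi fun _ => isCompact_closedBall 0 c).isSeqCompact
  obtain ⟨g, -, φ, hφ, hlim⟩ := hcube fun n ω _ => mem_closedBall_zero_iff.mpr (hu n ω)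
  exact ⟨g, φ, hφ, tendsto_pi_nhds.mp hlim⟩

theorem stmt15_general {Ω : Type*} [Countable Ω] [MeasurableSpace Ω]
    (μ : Measure Ω) [IsProbabilityMeasure μ]
    (C : Set (Lp ℝ 1 μ))
    (hclosed : IsClosed C)
    (c : ℝ)
    (hbound : ∀ f ∈ C, ∀ ω : Ω, |f ω| ≤ c * ‖f‖) :
    IsCompact {f ∈ C | ‖f‖ = 1} := by
  have hS : IsClosed {f ∈ C | ‖f‖ = 1} :=
    hclosed.inter (isClosed_eq continuous_norm continuous_const)
  refine IsSeqCompact.isCompact fun f hf => ?_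
  have hfc : ∀ n ω, ‖f n ω‖ ≤ c := fun n ω => by
    simpa [(hf n).2] using hbound (f n) (hf n).1 ω
  obtain ⟨g, φ, hφ, hlim⟩ := exists_strictMono_forall_tendsto_of_norm_le hfc
  have hconv := Lp.tendsto_toLp_of_tendsto_ae_of_norm_le (μ := μ) (F := f ∘ φ)
    (fun n => .of_forall (hfc (φ n))) (.of_forall hlim)
  exact ⟨_, hS.mem_of_tendsto hconv (.of_forall fun n => hf (φ n)), φ, hφ, hconv⟩

/-- let `μ` be a fully supported probability measure on a
countable set `Ω`, and let `C ⊆ L¹(Ω,μ)` be an L¹-closed cone on which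
`‖·‖_∞ ≤ c·‖·‖₁` for some `c > 0`. Then the set of elements of `C` of
L¹-norm one is compact in the L¹-norm topology. -/
theorem stmt15 {Ω : Type*} [Countable Ω] [MeasurableSpace Ω]
    [MeasurableSingletonClass Ω]
    (μ : Measure Ω) [IsProbabilityMeasure μ] (hfull : ∀ ω : Ω, 0 < μ {ω})
    (C : Set (Lp ℝ 1 μ))
    (hadd : ∀ f ∈ C, ∀ g ∈ C, f + g ∈ C)
    (hsmul : ∀ f ∈ C, ∀ t : ℝ, 0 ≤ t → t • f ∈ C)
    (hclosed : IsClosed C)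
    (c : ℝ) (hc : 0 < c)
    (hbound : ∀ f ∈ C, ∀ ω : Ω, |f ω| ≤ c * ‖f‖) :
    IsCompact {f ∈ C | ‖f‖ = 1} :=
  stmt15_general μ C hclosed c hbound
end

section
/- Let M be a median algebra and A ⊆ M an edge-connected subset: any two points of A can be joined by a finite sequence of points of A in which consecutive points are separated by exactly one wall of M. If 𝔥 and 𝔨 are halfspaces of M such that all four sets 𝔥∩A, 𝔥*∩A, 𝔨∩A, 𝔨*∩A are nonempty and 𝔥∩A = 𝔨∩A, then 𝔥 = 𝔨. -/
/-- `x` and `y` are separated by exactly one wall: there is a unique halfspace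
containing `y` but not `x`. -/
def EdgeStep {X : Type*} (med : X → X → X → X) (x y : X) : Prop :=
  ∃! h : Set X, IsHalfspace med h ∧ x ∉ h ∧ y ∈ h

/-- `A` is edge-connected: any two of its points are joined by a finite chain
of points of `A` in which consecutive points are separated by exactly one
wall. -/
def EdgeConnected {X : Type*} (med : X → X → X → X) (A : Set X) : Prop :=
  ∀ x ∈ A, ∀ y ∈ A,
    Relation.ReflTransGen (fun a b => b ∈ A ∧ EdgeStep med a b) x y

/-! A chain of edge steps in `A` from a point of `h ∩ A` to a point of `hᶜ ∩ A` contains a step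
`a → b` with `a ∈ h`, `b ∉ h`. Since `h ∩ A = k ∩ A`, the same step also leaves `k`. But `a` and
`b` are separated by a single wall, so `hᶜ` and `kᶜ` are the same halfspace. -/

theorem Relation.ReflTransGen.exists_step_of_mem_of_not_mem {α : Type*} {r : α → α → Prop}
    {S : Set α} {x y : α} (hxy : ReflTransGen r x y) (hx : x ∈ S) (hy : y ∉ S) :
    ∃ a ∈ S, ∃ b ∉ S, r a b := by
  by_contra! hstep
  refine hy ?_
  clear hy
  induction hxy with
  | refl => exact hx
  | tail _ hbc ih => exact by_contra fun hc => hstep _ ih _ hc hbc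

theorem IsHalfspace.compl {X : Type*} {med : X → X → X → X} {h : Set X}
    (hh : IsHalfspace med h) : IsHalfspace med hᶜ := by
  obtain ⟨hne, hcne, hconv, hcconv⟩ := hh
  rw [IsHalfspace, compl_compl]
  exact ⟨hcne, hne, hcconv, hconv⟩

theorem EdgeStep.eq_of_mem_of_not_mem {X : Type*} {med : X → X → X → X} {a b : X}
    (hab : EdgeStep med a b) {h k : Set X} (hh : IsHalfspace med h) (hk : IsHalfspace med k)
    (hah : a ∈ h) (hbh : b ∉ h) (hak : a ∈ k) (hbk : b ∉ k) : h = k :=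
  compl_injective <|
    hab.unique ⟨hh.compl, not_not_intro hah, hbh⟩ ⟨hk.compl, not_not_intro hak, hbk⟩

theorem stmt18_general {X : Type*} (M : MedianAlgebra X) (A : Set X)
    (hA : EdgeConnected M.med A)
    (h k : Set X) (hh : IsHalfspace M.med h) (hk : IsHalfspace M.med k)
    (h1 : (h ∩ A).Nonempty) (h2 : (hᶜ ∩ A).Nonempty)
    (heq : h ∩ A = k ∩ A) : h = k := by
  obtain ⟨x, hx⟩ := h1
  obtain ⟨y, hyh, hyA⟩ := h2
  obtain ⟨a, haS, b, hbS, hbA, hab⟩ :=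
    (hA x hx.2 y hyA).exists_step_of_mem_of_not_mem hx fun hy => hyh hy.1
  have hbh : b ∉ h := fun hbh => hbS ⟨hbh, hbA⟩
  have hak : a ∈ k := (heq.subset haS).1
  have hbk : b ∉ k := fun hbk => hbh (heq.symm.subset ⟨hbk, hbA⟩).1
  exact hab.eq_of_mem_of_not_mem hh hk haS.1 hbh hak hbk

/-- if `A` is an edge-connected subset of a median algebra and
`h`, `k` are halfspaces with `h∩A`, `hᶜ∩A`, `k∩A`, `kᶜ∩A` all nonempty and
`h ∩ A = k ∩ A`, then `h = k`. -/
theorem stmt18 {X : Type*} (M : MedianAlgebra X) (A : Set X)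
    (hA : EdgeConnected M.med A)
    (h k : Set X) (hh : IsHalfspace M.med h) (hk : IsHalfspace M.med k)
    (h1 : (h ∩ A).Nonempty) (h2 : (hᶜ ∩ A).Nonempty)
    (h3 : (k ∩ A).Nonempty) (h4 : (kᶜ ∩ A).Nonempty)
    (heq : h ∩ A = k ∩ A) : h = k :=
  stmt18_general M A hA h k hh hk h1 h2 heq
end
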